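/- Let h : ℝ^n → ℝ^n be a convex monotone positively homogeneous map for which 0 is a t-stable fixed point, and let B = B(h) be the set of indices having no access in G(h) to any critical node. Then the restricted map h_B : ℝ^B → ℝ^B has spectral radius τ(h_B) < 1, where τ(g) = sup{λ ≥ 0 : g(x) = λx for some x ∈ ℝ^B_+ \ {0}}. -/

import Mathlib

/-!
Suppose `λ ≥ 1` were an eigenvalue of `h_B` with a nonnegative eigenvector `y`, and let `x` be
its extension by zero, so that `0 ≤ x ≤ h x`. Each coordinate of `h` is sublinear, so Hahn–Banach
gives linear minorants touching at `x`: a matrix `P ∈ ∂h(0)`, nonnegative since `h` is monotone,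
with `x ≤ P x` and orbits bounded by those of `h`. Pick a node `i₀` of the support of `x` whose
class `C` in the graph of `P` is final among the classes meeting the support. Then
`x_C ≤ P_CC x_C`, so the increasing bounded orbit `P_CC^k x_C` converges to a nonzero fixed vector
of `P_CC`, while bounded orbits force every eigenvalue of `P_CC` into the unit disc. Thus `C` is a
critical class meeting `B`, which is absurd. Finally, the set of such `λ` is compact (normalise
the eigenvectors to the unit sphere), so its supremum is attained and is `< 1`.
-/

noncomputable section
open Filter Topology Set
open scoped Classical

/-- A square real matrix is *stable* if all of its orbits are bounded. -/
def MatStable {ι : Type*} [Fintype ι] [DecidableEq ι] (P : Matrix ι ι ℝ) : Prop :=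
  ∀ x : ι → ℝ, ∃ c : ℝ, ∀ k : ℕ, ‖(P ^ k).mulVec x‖ ≤ c

/-- Spectral radius of a real square matrix, via its complex spectrum. -/
def SpecRad {ι : Type*} [Fintype ι] (Q : Matrix ι ι ℝ) : ℝ :=
  haveI := Classical.decEq ι
  sSup {r : ℝ | ∃ μ : ℂ, μ ∈ spectrum ℂ (Q.map (fun a => (a : ℂ))) ∧ r = ‖μ‖}

/-- `i` has access to `j` in the digraph of the nonnegative matrix `P`. -/
def AccessM {n : ℕ} (P : Matrix (Fin n) (Fin n) ℝ) : Fin n → Fin n → Prop :=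
  Relation.ReflTransGen (fun i j => 0 < P i j)

/-- `C` is a class of `P` (an equivalence class of mutual access). -/
def IsClass {n : ℕ} (P : Matrix (Fin n) (Fin n) ℝ) (C : Set (Fin n)) : Prop :=
  ∃ i, C = {j | AccessM P i j ∧ AccessM P j i}

/-- Spectral radius of the principal submatrix `P_{CC}`. -/
def SpecRadOn {n : ℕ} (P : Matrix (Fin n) (Fin n) ℝ) (C : Set (Fin n)) : ℝ :=
  haveI : Fintype C := Fintype.ofFinite _
  SpecRad (Matrix.of fun i j : C => P i.1 j.1)

/-- A critical class of a stable nonnegative matrix. -/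
def IsCriticalClass {n : ℕ} (P : Matrix (Fin n) (Fin n) ℝ) (C : Set (Fin n)) : Prop :=
  IsClass P C ∧ SpecRadOn P C = 1

/-- The set of critical nodes of `P`. -/
def CriticalNodes {n : ℕ} (P : Matrix (Fin n) (Fin n) ℝ) : Set (Fin n) :=
  {i | ∃ C, IsCriticalClass P C ∧ i ∈ C}

/-- The subdifferential of `f` at `v` relative to the domain `D`. -/
def Subdiff {m n : ℕ} (f : (Fin m → ℝ) → (Fin n → ℝ)) (D : Set (Fin m → ℝ))
    (v : Fin m → ℝ) : Set (Matrix (Fin n) (Fin m) ℝ) :=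
  {M | ∀ x ∈ D, M.mulVec (x - v) ≤ f x - f v}

open Matrix

section ExtendByZero
variable {ι : Type*}

def extendByZero (S : Set ι) [DecidablePred (· ∈ S)] : (S → ℝ) →ₗ[ℝ] ι → ℝ where
  toFun y j := if hj : j ∈ S then y ⟨j, hj⟩ else 0
  map_add' y z := funext fun j => by by_cases hj : j ∈ S <;> simp [hj]
  map_smul' c y := funext fun j => by by_cases hj : j ∈ S <;> simp [hj]

variable {S : Set ι} [DecidablePred (· ∈ S)]

lemma extendByZero_apply (y : S → ℝ) (j : ι) :
    extendByZero S y j = if hj : j ∈ S then y ⟨j, hj⟩ else 0 :=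
  rfl

@[simp]
lemma extendByZero_apply_coe (y : S → ℝ) (j : S) : extendByZero S y j = y j :=
  dif_pos j.2

lemma extendByZero_nonneg {y : S → ℝ} (hy : 0 ≤ y) : 0 ≤ extendByZero S y := fun j => by
  rw [extendByZero_apply]
  split_ifs
  exacts [hy _, le_rfl]

end ExtendByZero

namespace Matrix

lemma mulVec_mono_of_nonneg {ι : Type*} [Fintype ι] {Q : Matrix ι ι ℝ}
    (hQ : ∀ i j, 0 ≤ Q i j) {x y : ι → ℝ} (hxy : x ≤ y) : Q *ᵥ x ≤ Q *ᵥ y := fun i =>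
  Finset.sum_le_sum fun j _ => mul_le_mul_of_nonneg_left (hxy j) (hQ i j)

lemma mulVec_nonneg_of_nonneg {ι : Type*} [Fintype ι] {Q : Matrix ι ι ℝ}
    (hQ : ∀ i j, 0 ≤ Q i j) {x : ι → ℝ} (hx : 0 ≤ x) : 0 ≤ Q *ᵥ x := fun i =>
  Finset.sum_nonneg fun j _ => mul_nonneg (hQ i j) (hx j)

lemma mem_spectrum_iff_exists_mulVec_eq_smul {K ι : Type*} [Field K] [Fintype ι]
    [DecidableEq ι] {A : Matrix ι ι K} {μ : K} :
    μ ∈ spectrum K A ↔ ∃ v ≠ 0, A *ᵥ v = μ • v := by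
  rw [← spectrum_toLin', ← Module.End.hasEigenvalue_iff_mem_spectrum]
  constructor
  · intro hμ
    obtain ⟨v, hv⟩ := hμ.exists_hasEigenvector
    exact ⟨v, hv.2, hv.apply_eq_smul⟩
  · rintro ⟨v, hv0, hv⟩
    exact Module.End.hasEigenvalue_of_hasEigenvector
      ⟨Module.End.mem_eigenspace_iff.mpr hv, hv0⟩

section Spectrum

variable {ι : Type*} [Fintype ι] [DecidableEq ι] {Q : Matrix ι ι ℝ}

lemma norm_le_one_of_mem_spectrum (hQ : ∀ i j, 0 ≤ Q i j)
    (hbdd : ∀ x : ι → ℝ, 0 ≤ x → BddAbove (range fun k : ℕ => (Q ^ k) *ᵥ x)) {μ : ℂ}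
    (hμ : μ ∈ spectrum ℂ (Q.map (fun a => (a : ℂ)))) : ‖μ‖ ≤ 1 := by
  obtain ⟨v, hv0, hv⟩ := mem_spectrum_iff_exists_mulVec_eq_smul.mp hμ
  obtain ⟨i, hi⟩ := Function.ne_iff.mp hv0
  obtain ⟨c, hc⟩ := hbdd (fun j => ‖v j‖) fun j => norm_nonneg _
  have hpow (k : ℕ) : (Q ^ k).map (fun a => (a : ℂ)) *ᵥ v = μ ^ k • v := by
    rw [show (Q ^ k).map (fun a => (a : ℂ)) = Q.map (fun a => (a : ℂ)) ^ k from
      Matrix.map_pow Q Complex.ofRealHom k]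
    induction k with
    | zero => simp
    | succ k ih => rw [pow_succ', ← mulVec_mulVec, ih, mulVec_smul, hv, smul_smul, pow_succ]
  -- nonnegativity of `Q` gives `|Q^k v| ≤ Q^k |v|` entrywise
  have hgrowth (k : ℕ) : ‖μ‖ ^ k * ‖v i‖ ≤ c i :=
    calc ‖μ‖ ^ k * ‖v i‖ = ‖((Q ^ k).map (fun a => (a : ℂ)) *ᵥ v) i‖ := by simp [hpow]
      _ = ‖∑ j, ((Q ^ k) i j : ℂ) * v j‖ := rfl
      _ ≤ ∑ j, (Q ^ k) i j * ‖v j‖ := by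
          refine (norm_sum_le _ _).trans_eq (Finset.sum_congr rfl fun j _ => ?_)
          rw [norm_mul, Complex.norm_real, Real.norm_of_nonneg (pow_apply_nonneg hQ k i j)]
      _ ≤ c i := hc ⟨k, rfl⟩ i
  by_contra! hμ1
  obtain ⟨k, hk⟩ := pow_unbounded_of_one_lt (c i / ‖v i‖) hμ1
  exact hk.not_ge ((le_div_iff₀ (norm_pos_iff.mpr hi)).mpr (hgrowth k))

lemma exists_mulVec_eq_self_of_le_mulVec (hQ : ∀ i j, 0 ≤ Q i j)
    {w : ι → ℝ} (hwQ : w ≤ Q *ᵥ w) (hbdd : BddAbove (range fun k : ℕ => (Q ^ k) *ᵥ w)) :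
    ∃ v, w ≤ v ∧ Q *ᵥ v = v := by
  have hmono : Monotone fun k : ℕ => (Q ^ k) *ᵥ w := monotone_nat_of_le_succ fun k => by
    rw [pow_succ, ← mulVec_mulVec]
    exact mulVec_mono_of_nonneg (pow_apply_nonneg hQ k) hwQ
  set v := ⨆ k : ℕ, (Q ^ k) *ᵥ w
  have hlim : Tendsto (fun k : ℕ => (Q ^ k) *ᵥ w) atTop (𝓝 v) := tendsto_atTop_ciSup hmono hbdd
  have hlimQ : Tendsto (fun k : ℕ => Q *ᵥ ((Q ^ k) *ᵥ w)) atTop (𝓝 (Q *ᵥ v)) :=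
    ((continuous_const.matrix_mulVec continuous_id).tendsto v).comp hlim
  have hlim' : Tendsto (fun k : ℕ => Q *ᵥ ((Q ^ k) *ᵥ w)) atTop (𝓝 v) := by
    simpa only [mulVec_mulVec, ← pow_succ'] using (tendsto_add_atTop_iff_nat 1).mpr hlim
  exact ⟨v, by simpa using le_ciSup hbdd 0, tendsto_nhds_unique hlimQ hlim'⟩

lemma specRad_eq_one_of_le_mulVec (hQ : ∀ i j, 0 ≤ Q i j)
    (hbdd : ∀ x : ι → ℝ, 0 ≤ x → BddAbove (range fun k : ℕ => (Q ^ k) *ᵥ x))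
    {w : ι → ℝ} (hw0 : 0 ≤ w) (hw : w ≠ 0) (hwQ : w ≤ Q *ᵥ w) : SpecRad Q = 1 := by
  -- `SpecRad` is defined with the classical instance of `DecidableEq ι`
  obtain rfl : ‹DecidableEq ι› = Classical.decEq ι := Subsingleton.elim _ _
  obtain ⟨v, hwv, hv⟩ := exists_mulVec_eq_self_of_le_mulVec hQ hwQ (hbdd w hw0)
  have hv0 : v ≠ 0 := fun h => hw (le_antisymm (h ▸ hwv) hw0)
  have hone : (1 : ℂ) ∈ spectrum ℂ (Q.map (fun a => (a : ℂ))) := by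
    refine mem_spectrum_iff_exists_mulVec_eq_smul.mpr ⟨fun i => (v i : ℂ), ?_, ?_⟩
    · exact fun h => hv0 (funext fun i => by simpa using congrFun h i)
    · rw [one_smul]
      funext i
      exact (RingHom.map_mulVec Complex.ofRealHom Q v i).symm.trans (congrArg _ (congrFun hv i))
  refine IsGreatest.csSup_eq ⟨⟨1, hone, by simp⟩, ?_⟩
  rintro r ⟨μ, hμ, rfl⟩
  exact norm_le_one_of_mem_spectrum hQ hbdd hμ

end Spectrum

section Submatrix

variable {ι : Type*} [Fintype ι] {P : Matrix ι ι ℝ} {S : Set ι} [Fintype S]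

lemma submatrix_mulVec_le (hP : ∀ i j, 0 ≤ P i j) {x : ι → ℝ} (hx : 0 ≤ x) (i : S) :
    (P.submatrix (Subtype.val : S → ι) Subtype.val *ᵥ fun j : S => x j) i ≤ (P *ᵥ x) i := by
  simp only [mulVec, dotProduct, submatrix_apply]
  rw [Finset.sum_set_coe (f := fun j => P i j * x j)]
  exact Finset.sum_le_univ_sum_of_nonneg fun j => mul_nonneg (hP i j) (hx j)

lemma submatrix_mulVec_eq {x : ι → ℝ} {i : S} (hx : ∀ j ∉ S, P i j * x j = 0) :
    (P.submatrix (Subtype.val : S → ι) Subtype.val *ᵥ fun j : S => x j) i = (P *ᵥ x) i := by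
  simp only [mulVec, dotProduct, submatrix_apply]
  rw [Finset.sum_set_coe (f := fun j => P i j * x j)]
  exact Finset.sum_subset (Finset.subset_univ _) fun j _ hj => hx j (by simpa using hj)

variable [DecidableEq ι]

lemma submatrix_pow_mulVec_le (hP : ∀ i j, 0 ≤ P i j) {x : ι → ℝ} (hx : 0 ≤ x) (k : ℕ)
    (i : S) :
    (P.submatrix (Subtype.val : S → ι) Subtype.val ^ k *ᵥ fun j : S => x j) i ≤
      (P ^ k *ᵥ x) i := by
  set Q := P.submatrix (Subtype.val : S → ι) Subtype.val
  induction k generalizing i with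
  | zero => simp
  | succ k ih =>
    calc (Q ^ (k + 1) *ᵥ fun j : S => x j) i = (Q *ᵥ (Q ^ k *ᵥ fun j : S => x j)) i := by
          rw [pow_succ', mulVec_mulVec]
      _ ≤ (Q *ᵥ fun j : S => (P ^ k *ᵥ x) j) i := mulVec_mono_of_nonneg (fun _ _ => hP _ _) ih i
      _ ≤ (P *ᵥ (P ^ k *ᵥ x)) i :=
          submatrix_mulVec_le hP (mulVec_nonneg_of_nonneg (pow_apply_nonneg hP k) hx) i
      _ = (P ^ (k + 1) *ᵥ x) i := by rw [pow_succ', mulVec_mulVec]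

lemma bddAbove_submatrix_pow_mulVec (hP : ∀ i j, 0 ≤ P i j)
    (hbdd : ∀ x : ι → ℝ, 0 ≤ x → BddAbove (range fun k : ℕ => P ^ k *ᵥ x))
    {y : S → ℝ} (hy : 0 ≤ y) :
    BddAbove (range fun k : ℕ => P.submatrix (Subtype.val : S → ι) Subtype.val ^ k *ᵥ y) := by
  obtain ⟨c, hc⟩ := hbdd (extendByZero S y) (extendByZero_nonneg hy)
  refine ⟨fun j : S => c j, ?_⟩
  rintro _ ⟨k, rfl⟩ j
  have := submatrix_pow_mulVec_le hP (extendByZero_nonneg hy) k j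
  simp only [extendByZero_apply_coe] at this
  exact this.trans (hc ⟨k, rfl⟩ j)

end Submatrix

end Matrix

lemma exists_final_node {α : Type*} [Finite α] (r : α → α → Prop) {S : Set α}
    (hS : S.Nonempty) :
    ∃ i ∈ S, ∀ j ∈ S, Relation.ReflTransGen r i j → Relation.ReflTransGen r j i := by
  obtain ⟨i, hiS, hmin⟩ :=
    S.toFinite.exists_minimalFor (fun i => {j | Relation.ReflTransGen r i j}) S hS
  exact ⟨i, hiS, fun j hjS hij => hmin hjS (fun _ hk => hij.trans hk) .refl⟩

lemma exists_mem_criticalNodes_of_le_mulVec {n : ℕ} {P : Matrix (Fin n) (Fin n) ℝ}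
    (hP : ∀ i j, 0 ≤ P i j)
    (hbdd : ∀ x : Fin n → ℝ, 0 ≤ x → BddAbove (range fun k : ℕ => P ^ k *ᵥ x))
    {x : Fin n → ℝ} (hx0 : 0 ≤ x) (hx : x ≠ 0) (hxP : x ≤ P *ᵥ x) :
    ∃ i, 0 < x i ∧ i ∈ CriticalNodes P := by
  have hsupp : {i | 0 < x i}.Nonempty := by
    obtain ⟨i, hi⟩ := Function.ne_iff.mp hx
    exact ⟨i, (hx0 i).lt_of_ne' hi⟩
  obtain ⟨i₀, hi₀, hfinal⟩ := exists_final_node (fun i j => 0 < P i j) hsupp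
  set C : Set (Fin n) := {j | AccessM P i₀ j ∧ AccessM P j i₀}
  have hi₀C : i₀ ∈ C := ⟨.refl, .refl⟩
  have hC : ∀ i ∈ C, ∀ j, 0 < P i j → 0 < x j → j ∈ C := fun i hi j hij hj =>
    ⟨hi.1.tail hij, hfinal j hj (hi.1.tail hij)⟩
  let : Fintype C := Fintype.ofFinite _
  have hxC : (fun i : C => x i) ≤ P.submatrix (Subtype.val : C → Fin n) Subtype.val *ᵥ
      fun i : C => x i := fun i => by
    refine (hxP i).trans_eq (submatrix_mulVec_eq fun j hj => ?_).symm
    rcases (hx0 j).eq_or_lt with hxj | hxj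
    · simp [← hxj]
    · have hPij : P i j = 0 := ((hP i j).eq_of_not_lt fun hij => hj (hC i i.2 j hij hxj)).symm
      rw [hPij, zero_mul]
  have hcrit : SpecRadOn P C = 1 :=
    specRad_eq_one_of_le_mulVec (fun i j => hP i j)
      (fun y hy => bddAbove_submatrix_pow_mulVec hP hbdd hy) (fun i => hx0 i)
      (fun h => hi₀.ne' (congrFun h ⟨i₀, hi₀C⟩)) hxC
  exact ⟨i₀, hi₀, C, ⟨⟨i₀, rfl⟩, hcrit⟩, hi₀C⟩

section Sublinear

variable {E : Type*} [AddCommGroup E] [Module ℝ E] {N : E → ℝ}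

lemma ConvexOn.add_le_of_homogeneous (hN : ConvexOn ℝ univ N)
    (hhom : ∀ c : ℝ, 0 < c → ∀ x, N (c • x) = c * N x) (x y : E) :
    N (x + y) ≤ N x + N y := by
  have hmid := hN.2 (mem_univ x) (mem_univ y) (by norm_num : (0 : ℝ) ≤ 1 / 2)
    (by norm_num : (0 : ℝ) ≤ 1 / 2) (by norm_num)
  have hxy : x + y = (2 : ℝ) • ((1 / 2 : ℝ) • x + (1 / 2 : ℝ) • y) := by
    rw [smul_add, smul_smul, smul_smul]; norm_num
  rw [hxy, hhom 2 two_pos]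
  simp only [smul_eq_mul] at hmid
  linarith

lemma exists_linear_le_eq_of_sublinear
    (hhom : ∀ c : ℝ, 0 < c → ∀ x, N (c • x) = c * N x) (hadd : ∀ x y, N (x + y) ≤ N x + N y)
    (z : E) : ∃ g : E →ₗ[ℝ] ℝ, g z = N z ∧ ∀ x, g x ≤ N x := by
  have hN0 : N 0 = 0 := by
    have h2 := hhom 2 two_pos 0
    rw [smul_zero] at h2
    linarith
  have hline (c : ℝ) : c * N z ≤ N (c • z) := by
    rcases lt_trichotomy c 0 with hc | rfl | hc
    · have := hadd (c • z) ((-c) • z)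
      rw [← add_smul, add_neg_cancel, zero_smul, hN0, hhom _ (neg_pos.mpr hc)] at this
      linarith
    · simp [hN0]
    · rw [hhom c hc]
  let f := LinearPMap.mkSpanSingleton' (σ := RingHom.id ℝ) z (N z) fun c hc => by
    rcases eq_or_ne c 0 with rfl | hc0
    · exact zero_smul _ _
    · rw [(smul_eq_zero.mp hc).resolve_left hc0, hN0, smul_zero]
  obtain ⟨g, hgf, hgN⟩ := exists_extension_of_le_sublinear f N hhom hadd fun ⟨w, hw⟩ => by
    obtain ⟨c, rfl⟩ := Submodule.mem_span_singleton.mp hw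
    exact (LinearPMap.mkSpanSingleton'_apply _ _ _ c hw).trans_le (hline c)
  exact ⟨g, (hgf ⟨z, Submodule.mem_span_singleton_self z⟩).trans
    (LinearPMap.mkSpanSingleton'_apply_self _ _ _ _), hgN⟩

end Sublinear

section Subdifferential

variable {m n : ℕ} {h : (Fin m → ℝ) → (Fin n → ℝ)}

lemma exists_mem_subdiff_mulVec_eq (hconv : ∀ i, ConvexOn ℝ univ fun x => h x i)
    (hhom : ∀ t : ℝ, 0 < t → ∀ x, h (t • x) = t • h x) (h0 : h 0 = 0) (z : Fin m → ℝ) :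
    ∃ P ∈ Subdiff h univ 0, P *ᵥ z = h z := by
  have hhom' (i : Fin n) (c : ℝ) (hc : 0 < c) (x : Fin m → ℝ) : h (c • x) i = c * h x i := by
    rw [hhom c hc]; rfl
  choose g hgz hgh using fun i => exists_linear_le_eq_of_sublinear (N := fun x => h x i) (hhom' i)
    ((hconv i).add_le_of_homogeneous (hhom' i)) z
  have hP (x : Fin m → ℝ) : LinearMap.toMatrix' (LinearMap.pi g) *ᵥ x = fun i => g i x := by
    rw [← Matrix.toLin'_apply, Matrix.toLin'_toMatrix']
    rfl
  refine ⟨LinearMap.toMatrix' (LinearMap.pi g), fun x _ i => ?_, ?_⟩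
  · simpa [hP, h0] using hgh i x
  · simpa [hP] using funext hgz

lemma mulVec_le_of_mem_subdiff (h0 : h 0 = 0) {P : Matrix (Fin n) (Fin m) ℝ}
    (hP : P ∈ Subdiff h univ 0) (x : Fin m → ℝ) : P *ᵥ x ≤ h x := by
  simpa [h0] using hP x (mem_univ x)

lemma nonneg_of_mem_subdiff (hmono : Monotone h) {P : Matrix (Fin n) (Fin m) ℝ}
    (hP : P ∈ Subdiff h univ 0) (i : Fin n) (j : Fin m) : 0 ≤ P i j := by
  have hneg : -Pi.single j 1 ≤ (0 : Fin m → ℝ) := neg_nonpos.mpr (Pi.single_nonneg.mpr zero_le_one)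
  have := hP (-Pi.single j 1) (mem_univ _) i
  simp only [sub_zero, Matrix.mulVec_neg, Matrix.mulVec_single_one] at this
  simpa using this.trans (sub_nonpos.mpr (hmono hneg i))

end Subdifferential

section MonotoneHomogeneous

variable {n : ℕ} {h : (Fin n → ℝ) → (Fin n → ℝ)}

lemma pow_mulVec_le_iterate {P : Matrix (Fin n) (Fin n) ℝ}
    (hP : ∀ i j, 0 ≤ P i j) (hPh : ∀ x, P *ᵥ x ≤ h x) (k : ℕ) (x : Fin n → ℝ) :
    P ^ k *ᵥ x ≤ h^[k] x := by
  induction k generalizing x with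
  | zero => simp
  | succ k ih =>
    calc P ^ (k + 1) *ᵥ x = P ^ k *ᵥ (P *ᵥ x) := by rw [pow_succ, mulVec_mulVec]
      _ ≤ P ^ k *ᵥ h x := mulVec_mono_of_nonneg (pow_apply_nonneg hP k) (hPh x)
      _ ≤ h^[k] (h x) := ih (h x)
      _ = h^[k + 1] x := (Function.iterate_succ_apply h k x).symm

lemma exists_mem_criticalNodes_of_le_map (hconv : ∀ i, ConvexOn ℝ univ fun x => h x i)
    (hmono : Monotone h) (hhom : ∀ t : ℝ, 0 < t → ∀ x, h (t • x) = t • h x) (h0 : h 0 = 0)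
    (horb : ∀ x : Fin n → ℝ, ∃ u : Fin n → ℝ, ∀ k : ℕ, h^[k] x ≤ u)
    {x : Fin n → ℝ} (hx0 : 0 ≤ x) (hx : x ≠ 0) (hxh : x ≤ h x) :
    ∃ P ∈ Subdiff h univ 0, ∃ i, 0 < x i ∧ i ∈ CriticalNodes P := by
  obtain ⟨P, hP, hPx⟩ := exists_mem_subdiff_mulVec_eq hconv hhom h0 x
  have hPnn := nonneg_of_mem_subdiff hmono hP
  have hbdd (y : Fin n → ℝ) (_ : 0 ≤ y) : BddAbove (range fun k : ℕ => P ^ k *ᵥ y) := by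
    obtain ⟨u, hu⟩ := horb y
    refine ⟨u, ?_⟩
    rintro _ ⟨k, rfl⟩
    exact (pow_mulVec_le_iterate hPnn (mulVec_le_of_mem_subdiff h0 hP) k y).trans (hu k)
  exact ⟨P, hP, exists_mem_criticalNodes_of_le_mulVec hPnn hbdd hx0 hx (hPx ▸ hxh)⟩

lemma lt_one_of_extendByZero_eigenvector (hconv : ∀ i, ConvexOn ℝ univ fun x => h x i)
    (hmono : Monotone h) (hhom : ∀ t : ℝ, 0 < t → ∀ x, h (t • x) = t • h x) (h0 : h 0 = 0)
    (horb : ∀ x : Fin n → ℝ, ∃ u : Fin n → ℝ, ∀ k : ℕ, h^[k] x ≤ u)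
    {B : Set (Fin n)} [DecidablePred (· ∈ B)]
    (hB : ∀ P ∈ Subdiff h univ 0, ∀ i ∈ B, i ∉ CriticalNodes P)
    {lam : ℝ} {y : B → ℝ} (hy0 : 0 ≤ y) (hy : y ≠ 0)
    (hyh : (fun i : B => h (extendByZero B y) i) = lam • y) : lam < 1 := by
  by_contra! hlam
  set x := extendByZero B y with hx_def
  have hx0 : 0 ≤ x := extendByZero_nonneg hy0
  have hx : x ≠ 0 := fun hx => hy (funext fun j => by simpa [x] using congrFun hx j)
  have hxh : x ≤ h x := fun j => by
    by_cases hj : j ∈ B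
    · calc x j = y ⟨j, hj⟩ := extendByZero_apply_coe y ⟨j, hj⟩
        _ ≤ lam * y ⟨j, hj⟩ := le_mul_of_one_le_left (hy0 _) hlam
        _ = h x j := (congrFun hyh ⟨j, hj⟩).symm
    · calc x j = h 0 j := by rw [h0, hx_def, extendByZero_apply, dif_neg hj, Pi.zero_apply]
        _ ≤ h x j := hmono hx0 j
  obtain ⟨P, hP, i, hi, hcrit⟩ :=
    exists_mem_criticalNodes_of_le_map hconv hmono hhom h0 horb hx0 hx hxh
  refine hB P hP i ?_ hcrit
  by_contra hiB
  rw [hx_def, extendByZero_apply, dif_neg hiB] at hi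
  exact hi.false

end MonotoneHomogeneous

lemma isCompact_setOf_nonneg_eigenvalue {ι : Type*} [Fintype ι] {g : (ι → ℝ) → (ι → ℝ)}
    (hg : Continuous g) (hhom : ∀ t : ℝ, 0 < t → ∀ x, g (t • x) = t • g x) :
    IsCompact {lam : ℝ | 0 ≤ lam ∧ ∃ x : ι → ℝ, 0 ≤ x ∧ x ≠ 0 ∧ g x = lam • x} := by
  -- normalising the eigenvector, the eigenvalue becomes the continuous function `‖g x‖`
  set K := Metric.sphere (0 : ι → ℝ) 1 ∩ {x | 0 ≤ x ∧ g x = ‖g x‖ • x}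
  have hK : IsCompact K := (isCompact_sphere 0 1).inter_right <|
    (isClosed_le continuous_const continuous_id).inter
      (isClosed_eq hg ((continuous_norm.comp hg).smul continuous_id))
  convert hK.image (continuous_norm.comp hg) using 1
  ext lam
  constructor
  · rintro ⟨hlam, x, hx0, hx, hgx⟩
    have hxn : 0 < ‖x‖ := norm_pos_iff.mpr hx
    have hgy : g (‖x‖⁻¹ • x) = lam • ‖x‖⁻¹ • x := by
      rw [hhom _ (inv_pos.mpr hxn), hgx, smul_comm]
    have hny : ‖g (‖x‖⁻¹ • x)‖ = lam := by
      rw [hgy, norm_smul, norm_smul, norm_inv, norm_norm, inv_mul_cancel₀ hxn.ne',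
        Real.norm_of_nonneg hlam, mul_one]
    refine ⟨‖x‖⁻¹ • x, ⟨?_, ?_, ?_⟩, hny⟩
    · rw [mem_sphere_zero_iff_norm, norm_smul, norm_inv, norm_norm, inv_mul_cancel₀ hxn.ne']
    · exact smul_nonneg (inv_nonneg.mpr hxn.le) hx0
    · rw [hny, hgy]
  · rintro ⟨x, ⟨hx1, hx0, hgx⟩, rfl⟩
    refine ⟨norm_nonneg _, x, hx0, ?_, hgx⟩
    rintro rfl
    simp at hx1

/-- for a convex monotone positively homogeneous map h with 0 as a
t-stable fixed point, the restriction of h to the coordinates B(h) having no access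
to a critical node has spectral radius strictly less than one. -/
theorem stmt15 {n : ℕ} (h : (Fin n → ℝ) → (Fin n → ℝ))
    (hconv : ∀ i, ConvexOn ℝ Set.univ (fun x => h x i))
    (hmono : Monotone h)
    (hhom : ∀ t : ℝ, 0 < t → ∀ x, h (t • x) = t • h x)
    (h0 : h 0 = 0)
    (horb : ∀ x : Fin n → ℝ, ∃ u : Fin n → ℝ, ∀ k : ℕ, h^[k] x ≤ u) :
    let Edge : Fin n → Fin n → Prop :=
      fun i j => ∃ P ∈ Subdiff h Set.univ 0, 0 < P i j
    let Nc : Set (Fin n) := {i | ∃ P ∈ Subdiff h Set.univ 0, i ∈ CriticalNodes P}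
    let A : Set (Fin n) := {i | ∃ j ∈ Nc, Relation.ReflTransGen Edge i j}
    let B : Set (Fin n) := Aᶜ
    let hB : (B → ℝ) → (B → ℝ) := fun y i =>
      h (fun j => if hj : j ∈ B then y ⟨j, hj⟩ else 0) i.1
    sSup {lam : ℝ | 0 ≤ lam ∧ ∃ x : B → ℝ, 0 ≤ x ∧ x ≠ 0 ∧ hB x = lam • x} < 1 := by
  intro Edge Nc A B hB
  set T := {lam : ℝ | 0 ≤ lam ∧ ∃ x : B → ℝ, 0 ≤ x ∧ x ≠ 0 ∧ hB x = lam • x}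
  have hB_eq : hB = fun y (i : B) => h (extendByZero B y) i := rfl
  have hh : Continuous h :=
    continuous_pi fun i => continuousOn_univ.mp ((hconv i).continuousOn isOpen_univ)
  have hB_cont : Continuous hB := by
    rw [hB_eq]
    exact continuous_pi fun i =>
      (continuous_apply i.1).comp (hh.comp (extendByZero B).continuous_of_finiteDimensional)
  have hB_hom (t : ℝ) (ht : 0 < t) (y : B → ℝ) : hB (t • y) = t • hB y := by
    simp only [hB_eq, map_smul, hhom t ht]
    rfl
  have hlt : ∀ lam ∈ T, lam < 1 := by
    rintro lam ⟨-, y, hy0, hy, hyh⟩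
    refine lt_one_of_extendByZero_eigenvector hconv hmono hhom h0 horb ?_ hy0 hy hyh
    exact fun P hP i hiB hcrit => hiB ⟨i, ⟨P, hP, hcrit⟩, .refl⟩
  rcases T.eq_empty_or_nonempty with hT | hT
  · rw [hT, Real.sSup_empty]
    exact one_pos
  · exact hlt _ ((isCompact_setOf_nonneg_eigenvalue hB_cont hB_hom).sSup_mem hT)
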